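/- Let R be a division ring, A ∈ R^{n×n} invertible, u ∈ R^{1×n}, v ∈ R^{n×1}, and suppose f = u A⁻¹ v is nonzero. Then the (n+1)×(n+1) block matrix B = [[-v, A],[0, u]] is invertible and e_1 B⁻¹ e_{n+1} = f⁻¹, where e_1 is the first standard basis row vector and e_{n+1} is the last standard basis column vector. -/

import Mathlib

/-!
Block multiplication shows that `[[-v, A], [0, u]]` has the two-sided inverse
`[[-s⁻¹ u A⁻¹, s⁻¹], [A⁻¹ - A⁻¹ v s⁻¹ u A⁻¹, A⁻¹ v s⁻¹]]`, where `s = u A⁻¹ v` is the Schur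
complement of `A`; this holds over any ring, for any shapes of `u` and `v`, once `s` is invertible.
For a single row `u` and column `v`, `s` is the `1 × 1` matrix `f`, and the corner entry of the
inverse is `s⁻¹ = f⁻¹`.
-/

namespace Matrix

section Ring

variable {R : Type*} [Ring R] {m n : Type*} [Fintype m] [Fintype n] [DecidableEq m]
  [DecidableEq n]

def fromBlocksNegInv (A' : Matrix n n R) (u : Matrix m n R) (v : Matrix n m R)
    (S : Matrix m m R) : Matrix (m ⊕ n) (n ⊕ m) R :=
  fromBlocks (-(S * u * A')) S (A' - A' * v * S * u * A') (A' * v * S)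

theorem fromBlocks_neg_mul_fromBlocksNegInv {A A' : Matrix n n R} {u : Matrix m n R}
    {v : Matrix n m R} {S : Matrix m m R} (hA : A * A' = 1) (hS : u * A' * v * S = 1) :
    fromBlocks (-v) A 0 u * fromBlocksNegInv A' u v S = 1 := by
  rw [fromBlocksNegInv, fromBlocks_multiply, ← fromBlocks_one]
  congr 1 <;> simp [Matrix.mul_sub, ← Matrix.mul_assoc, hA, hS]

theorem fromBlocksNegInv_mul_fromBlocks_neg {A A' : Matrix n n R} {u : Matrix m n R}
    {v : Matrix n m R} {S : Matrix m m R} (hA : A' * A = 1) (hS : S * (u * A' * v) = 1) :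
    fromBlocksNegInv A' u v S * fromBlocks (-v) A 0 u = 1 := by
  simp only [Matrix.mul_assoc] at hS
  rw [fromBlocksNegInv, fromBlocks_multiply, ← fromBlocks_one]
  congr 1 <;> simp [Matrix.sub_mul, Matrix.mul_assoc, hA, hS]

end Ring

section FinOne

variable {D : Type*} [DivisionRing D] {X : Matrix (Fin 1) (Fin 1) D}

theorem mul_scalar_inv_of_fin_one (h : X 0 0 ≠ 0) : X * scalar (Fin 1) (X 0 0)⁻¹ = 1 := by
  ext i j
  fin_cases i; fin_cases j
  simp [h]

theorem scalar_inv_mul_of_fin_one (h : X 0 0 ≠ 0) : scalar (Fin 1) (X 0 0)⁻¹ * X = 1 := by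
  ext i j
  fin_cases i; fin_cases j
  simp [h]

end FinOne

end Matrix

theorem stmt2 {D : Type*} [DivisionRing D] {n : ℕ}
    (A A' : Matrix (Fin n) (Fin n) D)
    (hA : A * A' = 1 ∧ A' * A = 1)
    (u : Matrix (Fin 1) (Fin n) D) (v : Matrix (Fin n) (Fin 1) D)
    (f : D) (hf : f = (u * A' * v) 0 0) (hf0 : f ≠ 0) :
    ∃ C : Matrix (Fin 1 ⊕ Fin n) (Fin n ⊕ Fin 1) D,
      Matrix.fromBlocks (-v) A 0 u * C = 1 ∧
      C * Matrix.fromBlocks (-v) A 0 u = 1 ∧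
      C (Sum.inl 0) (Sum.inr 0) = f⁻¹ := by
  subst hf
  refine ⟨Matrix.fromBlocksNegInv A' u v (Matrix.scalar (Fin 1) ((u * A' * v) 0 0)⁻¹),
    Matrix.fromBlocks_neg_mul_fromBlocksNegInv hA.1 (Matrix.mul_scalar_inv_of_fin_one hf0),
    Matrix.fromBlocksNegInv_mul_fromBlocks_neg hA.2 (Matrix.scalar_inv_mul_of_fin_one hf0), ?_⟩
  simp [Matrix.fromBlocksNegInv]
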